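/- arXiv:1301.1512 — 3 statements merged into one kernel-verified Lean document; each statement's English description precedes it below -/
import Mathlib

section
/- Let G be a graph on n ≥ 4 vertices containing a cycle C of length n−1, and let x be the unique vertex of G not on C. If d(x) ≥ n/2, then G is pancyclic. -/
open SimpleGraph

/-- `G` contains a cycle of length `k`. -/
def HasCycleLength {V : Type} (G : SimpleGraph V) (k : ℕ) : Prop :=
  ∃ (v : V) (c : G.Walk v v), c.IsCycle ∧ c.length = k

/-- A graph on `n` vertices is pancyclic if it contains cycles of every length from 3 to `n`. -/
def IsPancyclic {V : Type} [Fintype V] (G : SimpleGraph V) : Prop :=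
  ∀ k : ℕ, 3 ≤ k → k ≤ Fintype.card V → HasCycleLength G k

/-- A graph is Hamiltonian if it contains a spanning cycle. -/
def IsHamiltonianGraph {V : Type} (G : SimpleGraph V) : Prop :=
  ∃ (v : V) (c : G.Walk v v), c.IsCycle ∧ ∀ u : V, u ∈ c.support

/-- A graph is 2-connected if it has at least 3 vertices and deleting any single
vertex leaves a connected graph. -/
def TwoConnected {V : Type} [Fintype V] (G : SimpleGraph V) : Prop :=
  3 ≤ Fintype.card V ∧ ∀ v : V, (G.induce {u : V | u ≠ v}).Connected

/-- A (finite) graph is a cycle iff it is connected and 2-regular. -/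
def IsCycleGraph {V : Type} [Fintype V] (G : SimpleGraph V) [DecidableRel G.Adj] : Prop :=
  G.Connected ∧ ∀ v : V, G.degree v = 2

/-- `G` is `R`-f₁-heavy: for every induced copy of `R` in `G` (given by a graph
embedding `f : R ↪g G`) and every pair of vertices at distance 2 in that copy,
one of them has degree at least `(n+1)/2` in `G`. -/
def F1Heavy {V W : Type} [Fintype V] (G : SimpleGraph V) [DecidableRel G.Adj]
    (R : SimpleGraph W) : Prop :=
  ∀ (f : R ↪g G) (a b : W), R.dist a b = 2 →
    Fintype.card V + 1 ≤ 2 * max (G.degree (f a)) (G.degree (f b))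

/-- `G` is `R`-f-heavy: as above but with degree at least `n/2`. -/
def FHeavy {V W : Type} [Fintype V] (G : SimpleGraph V) [DecidableRel G.Adj]
    (R : SimpleGraph W) : Prop :=
  ∀ (f : R ↪g G) (a b : W), R.dist a b = 2 →
    Fintype.card V ≤ 2 * max (G.degree (f a)) (G.degree (f b))

/-- `G` is `R`-free: no induced subgraph of `G` is isomorphic to `R`. -/
def RFree {V W : Type} (G : SimpleGraph V) (R : SimpleGraph W) : Prop :=
  IsEmpty (R ↪g G)

/-- The claw `K_{1,3}`: vertex `0` is the center, adjacent to `1`, `2`, `3`. -/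
def claw : SimpleGraph (Fin 4) := SimpleGraph.fromRel (fun a _ => a = 0)

/-- `Z_i`: the path `0 1 2 ... (i+2)` together with the chord `{0,2}`,
i.e. a triangle `0 1 2` with a path of `i` edges attached at vertex `2`. -/
def Zgraph (i : ℕ) : SimpleGraph (Fin (i + 3)) :=
  SimpleGraph.fromRel (fun a b => b.val = a.val + 1 ∨ (a.val = 0 ∧ b.val = 2))

/-- The net `N`: triangle `0 1 2` with pendant edges `0-3`, `1-4`, `2-5`. -/
def netGraph : SimpleGraph (Fin 6) :=
  SimpleGraph.fromRel (fun a b =>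
    (a.val = 0 ∧ b.val = 1) ∨ (a.val = 1 ∧ b.val = 2) ∨ (a.val = 0 ∧ b.val = 2) ∨
    (a.val = 0 ∧ b.val = 3) ∨ (a.val = 1 ∧ b.val = 4) ∨ (a.val = 2 ∧ b.val = 5))

/-- The wounded `W`: triangle `0 1 2` with a pendant edge `0-3` and a pendant
path `1-4-5` of two edges. -/
def woundedGraph : SimpleGraph (Fin 6) :=
  SimpleGraph.fromRel (fun a b =>
    (a.val = 0 ∧ b.val = 1) ∨ (a.val = 1 ∧ b.val = 2) ∨ (a.val = 0 ∧ b.val = 2) ∨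
    (a.val = 0 ∧ b.val = 3) ∨ (a.val = 1 ∧ b.val = 4) ∨ (a.val = 4 ∧ b.val = 5))

/-!
Number the vertices of `C` by `ZMod (n - 1)`. The positions `S` of the neighbours of `x` fill
more than half of `ZMod (n - 1)`, so for every `1 ≤ j ≤ n - 2` the sets `S` and `S - j` meet:
`x` has two neighbours `j` steps apart along `C`, and the arc of `C` between them, closed up
through `x`, is a cycle of length `j + 2`.
-/

open Finset

theorem Finset.exists_mem_add_mem_of_card_lt {A : Type*} [AddGroup A] [Fintype A] [DecidableEq A]
    {S : Finset A} (hS : Fintype.card A < 2 * #S) (j : A) : ∃ a ∈ S, a + j ∈ S := by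
  obtain ⟨b, hb⟩ := inter_nonempty_of_card_lt_card_add_card (subset_univ S)
    (subset_univ (S.image (· - j)))
    (by rw [card_univ, card_image_of_injective _ (sub_left_injective (b := j))]; omega)
  obtain ⟨hbS, hbT⟩ := mem_inter.mp hb
  obtain ⟨a, haS, rfl⟩ := mem_image.mp hbT
  exact ⟨a - j, hbS, by simpa using haS⟩

namespace SimpleGraph

variable {V : Type} {G : SimpleGraph V}

lemma exists_walk_support_eq_map_range (f : ℕ → V) :
    ∀ j, (∀ i < j, G.Adj (f i) (f (i + 1))) →
      ∃ p : G.Walk (f 0) (f j), p.length = j ∧ p.support = (List.range (j + 1)).map f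
  | 0, _ => ⟨.nil, rfl, rfl⟩
  | j + 1, hadj => by
    obtain ⟨p, hl, hs⟩ :=
      exists_walk_support_eq_map_range f j fun i hi => hadj i (by omega)
    exact ⟨p.concat (hadj j j.lt_succ_self), by simp [hl],
      by simp [Walk.support_concat, hs, List.range_succ]⟩

lemma exists_isPath_of_injOn (f : ℕ → V) (j : ℕ) (hadj : ∀ i < j, G.Adj (f i) (f (i + 1)))
    (hinj : Set.InjOn f (Set.Iic j)) :
    ∃ p : G.Walk (f 0) (f j),
      p.IsPath ∧ p.length = j ∧ ∀ w ∈ p.support, w ∈ f '' Set.Iic j := by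
  obtain ⟨p, hl, hs⟩ := exists_walk_support_eq_map_range f j hadj
  refine ⟨p, .mk' ?_, hl, fun w hw => ?_⟩
  · rw [hs]
    exact List.nodup_range.map_on fun s hs t ht hst =>
      hinj (by simpa [Nat.lt_succ_iff] using hs) (by simpa [Nat.lt_succ_iff] using ht) hst
  · rw [hs, List.mem_map] at hw
    obtain ⟨i, hi, rfl⟩ := hw
    exact ⟨i, by simpa [Nat.lt_succ_iff] using hi, rfl⟩

lemma card_filter_adj_comp_eq_degree [Fintype V] [DecidableRel G.Adj] {α : Type*} [Fintype α]
    {f : α → V} (hf : f.Injective) {x : V} (hx : ∀ a, f a ≠ x)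
    (hcard : Fintype.card V = Fintype.card α + 1) :
    #{a | G.Adj x (f a)} = G.degree x := by
  classical
  have hrange : insert x (univ.image f) = univ := by
    refine eq_univ_of_card _ ?_
    rw [card_insert_of_notMem (by simpa using hx), card_image_of_injective _ hf, card_univ, hcard]
  rw [← card_neighborFinset_eq_degree, ← card_image_of_injective _ hf]
  congr 1
  ext y
  simp only [mem_image, mem_filter, mem_univ, true_and, mem_neighborFinset]
  refine ⟨by rintro ⟨a, ha, rfl⟩; exact ha, fun hy => ?_⟩
  obtain ⟨a, -, rfl⟩ := mem_image.mp <|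
    (mem_insert.mp (hrange ▸ mem_univ y)).resolve_left hy.ne'
  exact ⟨a, hy, rfl⟩

namespace Walk

lemma IsPath.hasCycleLength_length_add_two {u w x : V} {p : G.Walk u w} (hp : p.IsPath)
    (huw : u ≠ w) (hx : x ∉ p.support) (hxu : G.Adj x u) (hwx : G.Adj w x) :
    HasCycleLength G (p.length + 2) := by
  refine ⟨x, .cons hxu (p.concat hwx),
    (cons_isCycle_iff _ _).mpr ⟨hp.concat hx hwx, ?_⟩, by simp⟩
  rw [edges_concat, List.concat_eq_append, List.mem_append, List.mem_singleton]
  rintro (h | h)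
  · exact hx (p.fst_mem_support_of_mem_edges h)
  · rcases Sym2.eq_iff.mp h with ⟨rfl, -⟩ | ⟨-, rfl⟩
    · exact hx p.end_mem_support
    · exact huw rfl

variable {u : V} {c : G.Walk u u}

lemma IsCycle.neZero_length (hc : c.IsCycle) : NeZero c.length :=
  ⟨by have := hc.three_le_length; omega⟩

lemma IsCycle.injective_getVert_val (hc : c.IsCycle) :
    Function.Injective fun i : ZMod c.length => c.getVert i.val := by
  have := hc.neZero_length
  intro i j hij
  have hi := ZMod.val_lt i
  have hj := ZMod.val_lt j
  exact ZMod.val_injective _ <| hc.getVert_injOn'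
    (by simp only [Set.mem_ofPred_eq]; omega) (by simp only [Set.mem_ofPred_eq]; omega) hij

lemma IsCycle.adj_getVert_val_add_one (hc : c.IsCycle) (i : ZMod c.length) :
    G.Adj (c.getVert i.val) (c.getVert (i + 1).val) := by
  have := hc.neZero_length
  have hi := ZMod.val_lt i
  have h1 : (1 : ZMod c.length).val = 1 :=
    ZMod.val_one'' (by have := hc.three_le_length; omega)
  rw [ZMod.val_add, h1]
  rcases (show i.val + 1 ≤ c.length from hi).lt_or_eq with hlt | heq
  · rw [Nat.mod_eq_of_lt hlt]
    exact c.adj_getVert_succ hi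
  · rw [heq, Nat.mod_self, c.getVert_zero]
    simpa [heq] using c.adj_getVert_succ hi

lemma IsCycle.hasCycleLength_add_two_of_adj_getVert (hc : c.IsCycle) {x : V} (hx : x ∉ c.support)
    (a : ZMod c.length) {j : ℕ} (hj₀ : 0 < j) (hjc : j < c.length)
    (ha : G.Adj x (c.getVert a.val)) (hb : G.Adj x (c.getVert (a + j).val)) :
    HasCycleLength G (j + 2) := by
  have := hc.neZero_length
  set f : ℕ → V := fun t => c.getVert (a + t).val
  have hadj (i : ℕ) : G.Adj (f i) (f (i + 1)) := by
    simpa [f, add_assoc] using hc.adj_getVert_val_add_one (a + i)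
  have hinj : Set.InjOn f (Set.Iic j) := fun s hs t ht hst => by
    have := congrArg ZMod.val (add_left_cancel (hc.injective_getVert_val hst))
    simp only [Set.mem_Iic] at hs ht
    rwa [ZMod.val_natCast_of_lt (by omega), ZMod.val_natCast_of_lt (by omega)] at this
  obtain ⟨p, hp, hl, hsupp⟩ := exists_isPath_of_injOn f j (fun i _ => hadj i) hinj
  have hxp : x ∉ p.support := fun hxp => by
    obtain ⟨i, -, rfl⟩ := hsupp x hxp
    exact hx (c.getVert_mem_support _)
  have hne : f 0 ≠ f j := fun h => hj₀.ne (hinj (by simp) (by simp) h)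
  have := hp.hasCycleLength_length_add_two hne hxp (by simpa [f] using ha) hb.symm
  rwa [hl] at this

end Walk

end SimpleGraph

theorem pancyclic_of_heavy_vertex_off_cycle_general {V : Type} [Fintype V] (G : SimpleGraph V)
    [DecidableRel G.Adj]
    (v : V) (c : G.Walk v v) (hc : c.IsCycle)
    (hlen : c.length = Fintype.card V - 1)
    (x : V) (hx : x ∉ c.support)
    (hdeg : Fintype.card V ≤ 2 * G.degree x) :
    IsPancyclic G := by
  intro k hk₃ hkn
  have := hc.neZero_length
  set S : Finset (ZMod c.length) := {a | G.Adj x (c.getVert a.val)}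
  have hS : #S = G.degree x :=
    card_filter_adj_comp_eq_degree hc.injective_getVert_val
      (fun a h => hx (h ▸ c.getVert_mem_support _)) (by rw [ZMod.card]; omega)
  obtain ⟨a, ha, hb⟩ :=
    S.exists_mem_add_mem_of_card_lt (by rw [ZMod.card]; omega) ((k - 2 : ℕ) : ZMod c.length)
  have := hc.hasCycleLength_add_two_of_adj_getVert hx a (j := k - 2) (by omega) (by omega)
    (by simpa [S] using ha) (by simpa [S] using hb)
  rwa [Nat.sub_add_cancel (by omega)] at this

theorem pancyclic_of_heavy_vertex_off_cycle {V : Type} [Fintype V] (G : SimpleGraph V)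
    [DecidableRel G.Adj] (hn : 4 ≤ Fintype.card V)
    (v : V) (c : G.Walk v v) (hc : c.IsCycle)
    (hlen : c.length = Fintype.card V - 1)
    (x : V) (hx : x ∉ c.support)
    (hdeg : Fintype.card V ≤ 2 * G.degree x) :
    IsPancyclic G :=
  pancyclic_of_heavy_vertex_off_cycle_general G v c hc hlen x hx hdeg
end

section
/- Let G be a graph on n vertices with a Hamilton cycle C. If there exist two vertices x, y of G that are consecutive on C (i.e., d_C(x,y) = 1) and satisfy d(x) + d(y) ≥ n + 1, then G is pancyclic. -/
open SimpleGraph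

/-!
Write the Hamilton cycle as `x = v 0, y = v 1, v 2, …, v (n-1)` and fix `3 ≤ k < n`. Let `A` and
`B` be the sets of `j < n - 2` with `x ~ v (j+2)` and `y ~ v (j+2)` respectively, so that
`|A| + |B| ≥ d(x) + d(y) - 2 ≥ n - 1`. For `j ∈ B` let `a = (j + k - 3) % (n - 2)`, so that
`v (a+2)` lies `k - 3` steps after `v (j+2)` in the cyclic order of `v 2, …, v (n-1)`. If
`x ~ v (a+2)` there is a `k`-cycle: `x y v (j+2) … v (a+2)` if `j ≤ a`, and otherwise the crossing
chords `x v (a+2)` and `y v (j+2)` close the arcs `v (a+2) … v 1` and `v (j+2) … v (n-1)` into one.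
So without a `k`-cycle, `j ↦ a` maps `B` injectively into the complement of `A`, and
`|A| + |B| ≤ n - 2`.
-/

open Finset

theorem Finset.card_add_card_le_of_add_mod_notMem {A B : Finset ℕ} {N s : ℕ}
    (hA : A ⊆ range N) (hB : B ⊆ range N) (h : ∀ j ∈ B, (j + s) % N ∉ A) : #A + #B ≤ N := by
  have hinj : Set.InjOn (fun j => (j + s) % N) B := fun a ha b hb hab =>
    Nat.ModEq.eq_of_lt_of_lt (Nat.ModEq.add_right_cancel' s hab)
      (mem_range.mp (hB ha)) (mem_range.mp (hB hb))
  have hdisj : Disjoint A (B.image fun j => (j + s) % N) := by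
    rw [Finset.disjoint_left]
    rintro _ ha hi
    obtain ⟨j, hj, rfl⟩ := mem_image.mp hi
    exact h j hj ha
  have hsub : A ∪ B.image (fun j => (j + s) % N) ⊆ range N := by
    refine union_subset hA fun i hi => ?_
    obtain ⟨j, hj, rfl⟩ := mem_image.mp hi
    exact mem_range.mpr (Nat.mod_lt _ (by have := mem_range.mp (hB hj); omega))
  calc #A + #B = #(A ∪ B.image fun j => (j + s) % N) := by
        rw [card_union_of_disjoint hdisj, card_image_of_injOn hinj]
    _ ≤ N := by simpa using card_le_card hsub

namespace SimpleGraph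

variable {V : Type} {G : SimpleGraph V}

def IsPathSeq (G : SimpleGraph V) (f : ℕ → V) (k : ℕ) : Prop :=
  Set.InjOn f (Set.Iio k) ∧ ∀ i, i + 1 < k → G.Adj (f i) (f (i + 1))

namespace IsPathSeq

variable {f g : ℕ → V} {k m n : ℕ}

theorem hasCycleLength (hf : G.IsPathSeq f k) (hk : 3 ≤ k) (hclose : G.Adj (f (k - 1)) (f 0)) :
    HasCycleLength G k := by
  rw [HasCycleLength, ← cycleGraph_isContained_iff (by omega)]
  obtain ⟨m, rfl⟩ : ∃ m, k = m + 2 := ⟨k - 2, by omega⟩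
  have hstep : ∀ a b : Fin (m + 2), a - b = 1 → G.Adj (f b) (f a) := by
    intro a b hab
    rw [Fin.ext_iff, Fin.val_one] at hab
    by_cases hba : b ≤ a
    · rw [Fin.coe_sub_iff_le.mpr hba] at hab
      simpa [show (a : ℕ) = b + 1 by omega] using hf.2 b (by omega)
    · rw [Fin.coe_sub_iff_lt.mpr (not_le.mp hba)] at hab
      simpa [show (a : ℕ) = 0 by omega, show (b : ℕ) = m + 1 by omega] using hclose
  refine ⟨⟨⟨fun i => f i, fun {a b} hab => ?_⟩, fun a b hab => Fin.ext (hf.1 a.2 b.2 hab)⟩⟩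
  rcases cycleGraph_adj.mp hab with h | h
  · exact (hstep a b h).symm
  · exact hstep b a h

theorem mono (hf : G.IsPathSeq f n) (hmn : m ≤ n) : G.IsPathSeq f m :=
  ⟨hf.1.mono (Set.Iio_subset_Iio hmn), fun i hi => hf.2 i (by omega)⟩

theorem shift (hf : G.IsPathSeq f n) (j : ℕ) (hjm : j + m ≤ n) :
    G.IsPathSeq (fun i => f (j + i)) m :=
  ⟨fun a ha b hb hab => by
    simp only [Set.mem_Iio] at ha hb
    have := hf.1 (Set.mem_Iio.mpr (by omega)) (Set.mem_Iio.mpr (by omega)) hab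
    omega,
   fun i hi => hf.2 (j + i) (by omega)⟩

theorem reverse (hf : G.IsPathSeq f n) : G.IsPathSeq (fun i => f (n - 1 - i)) n :=
  ⟨fun a ha b hb hab => by
    simp only [Set.mem_Iio] at ha hb
    have := hf.1 (Set.mem_Iio.mpr (by omega)) (Set.mem_Iio.mpr (by omega)) hab
    omega,
   fun i hi => by simpa [show n - 1 - i = n - 1 - (i + 1) + 1 by omega] using
     (hf.2 (n - 1 - (i + 1)) (by omega)).symm⟩

theorem append (hf : G.IsPathSeq f m) (hg : G.IsPathSeq g n) (hm : 0 < m)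
    (hdisj : ∀ i < m, ∀ j < n, f i ≠ g j) (hjoin : G.Adj (f (m - 1)) (g 0)) :
    G.IsPathSeq (fun i => if i < m then f i else g (i - m)) (m + n) := by
  refine ⟨fun a ha b hb hab => ?_, fun i hi => ?_⟩
  · simp only [Set.mem_Iio] at ha hb
    dsimp only at hab
    split_ifs at hab with h₁ h₂ h₂
    · exact hf.1 h₁ h₂ hab
    · exact absurd hab (hdisj a h₁ (b - m) (by omega))
    · exact absurd hab.symm (hdisj b h₂ (a - m) (by omega))
    · have := hg.1 (Set.mem_Iio.mpr (by omega)) (Set.mem_Iio.mpr (by omega)) hab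
      omega
  · dsimp only
    split_ifs with h₁ h₂ h₂
    · exact hf.2 i h₂
    · obtain rfl : i = m - 1 := by omega
      rwa [Nat.sub_add_cancel hm, Nat.sub_self]
    · omega
    · simpa [show i + 1 - m = i - m + 1 by omega] using hg.2 (i - m) (by omega)

theorem hasCycleLength_two_add (hf : G.IsPathSeq f n) {j : ℕ} (hj : 2 ≤ j) (hjm : j + m ≤ n)
    (hm : 1 ≤ m) (h₁ : G.Adj (f 1) (f j)) (h₂ : G.Adj (f (j + m - 1)) (f 0)) :
    HasCycleLength G (2 + m) := by
  have hdisj : ∀ a < 2, ∀ b < m, f a ≠ f (j + b) := fun a ha b hb hab => by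
    have := hf.1 (Set.mem_Iio.mpr (by omega)) (Set.mem_Iio.mpr (by omega)) hab
    omega
  refine ((hf.mono (by omega)).append (hf.shift j hjm) two_pos hdisj (by simpa using h₁))
    |>.hasCycleLength (by omega) ?_
  rwa [if_neg (by omega), if_pos two_pos, show j + (2 + m - 1 - 2) = j + m - 1 by omega]

theorem hasCycleLength_of_crossing_chords (hf : G.IsPathSeq f n) {i j : ℕ} (hij : i < j)
    (hjn : j < n) (h₁ : G.Adj (f i) (f (n - 1))) (h₂ : G.Adj (f j) (f 0))
    (hk : 3 ≤ i + 1 + (n - j)) : HasCycleLength G (i + 1 + (n - j)) := by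
  have hdisj : ∀ a < i + 1, ∀ b < n - j, f a ≠ f (n - 1 - b) := fun a ha b hb hab => by
    have := hf.1 (Set.mem_Iio.mpr (by omega)) (Set.mem_Iio.mpr (by omega)) hab
    omega
  refine ((hf.mono (by omega)).append (hf.reverse.mono (Nat.sub_le n j)) i.succ_pos hdisj
    (by simpa using h₁)).hasCycleLength hk ?_
  rwa [if_neg (by omega), if_pos i.succ_pos,
    show n - 1 - (i + 1 + (n - j) - 1 - (i + 1)) = j by omega]

end IsPathSeq

theorem degree_le_card_filter_add_one [Fintype V] [DecidableRel G.Adj] {g : ℕ → V} {n : ℕ}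
    (hn : 2 ≤ n) (hg : ∀ u, ∃ i < n, g i = u) {u : V} (hu : u = g 0 ∨ u = g 1) :
    G.degree u ≤ #{j ∈ range (n - 2) | G.Adj u (g (2 + j))} + 1 := by
  have hsurj : Set.SurjOn g ({i ∈ range n | G.Adj u (g i)} : Finset ℕ) (G.neighborFinset u) := by
    intro w hw
    obtain ⟨i, hi, rfl⟩ := hg w
    exact ⟨i, by simpa [hi] using hw, rfl⟩
  have hsplit : #{i ∈ range n | G.Adj u (g i)} ≤
      #{i ∈ range 2 | G.Adj u (g i)} + #{j ∈ range (n - 2) | G.Adj u (g (2 + j))} := by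
    obtain ⟨N, rfl⟩ := Nat.exists_eq_add_of_le hn
    rw [Nat.add_sub_cancel_left, range_add_eq_union, filter_union, filter_map]
    refine (card_union_le _ _).trans_eq ?_
    rw [card_map]
    rfl
  have hfirst : #{i ∈ range 2 | G.Adj u (g i)} ≤ 1 := by
    rcases hu with rfl | rfl <;> simp [range_add_one, filter_insert, filter_singleton] <;>
      split_ifs <;> simp
  rw [← card_neighborFinset_eq_degree]
  have := card_le_card_of_surjOn g hsurj
  omega

namespace Walk

variable {x : V} {d : G.Walk x x}

theorem IsCycle.isHamiltonianCycle_of_forall_mem_support [DecidableEq V] (hd : d.IsCycle)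
    (hspan : ∀ u, u ∈ d.support) : d.IsHamiltonianCycle := by
  refine isHamiltonianCycle_iff_isCycle_and_support_count_tail_eq_one.mpr
    ⟨hd, fun u => List.count_eq_one_of_mem hd.support_nodup ?_⟩
  by_cases hu : u = x
  · exact hu ▸ end_mem_tail_support hd.not_nil
  · have hu' := hspan u
    rw [← d.cons_tail_support, List.mem_cons] at hu'
    exact hu'.resolve_left hu

theorem IsCycle.isPathSeq_getVert (hd : d.IsCycle) : G.IsPathSeq d.getVert d.length :=
  ⟨fun _ ha _ hb hab => hd.getVert_injOn' (Nat.le_sub_one_of_lt ha) (Nat.le_sub_one_of_lt hb) hab,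
   fun _ hi => d.adj_getVert_succ (by omega)⟩

theorem IsCycle.isPathSeq_getVert_one_add (hd : d.IsCycle) :
    G.IsPathSeq (fun i => d.getVert (1 + i)) d.length :=
  ⟨fun a ha b hb hab => by
    simp only [Set.mem_Iio] at ha hb
    have := hd.getVert_injOn (x₂ := 1 + b) ⟨by omega, by omega⟩ ⟨by omega, by omega⟩ hab
    omega,
   fun i hi => by simpa [add_assoc] using d.adj_getVert_succ (i := 1 + i) (by omega)⟩

theorem IsCycle.hasCycleLength_of_adj_of_adj (hd : d.IsCycle) {k j : ℕ} (hk : 3 ≤ k)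
    (hkn : k < d.length) (hj : j < d.length - 2) (hy : G.Adj d.snd (d.getVert (2 + j)))
    (hx : G.Adj x (d.getVert (2 + (j + (k - 3)) % (d.length - 2)))) :
    HasCycleLength G k := by
  rcases lt_or_ge (j + (k - 3)) (d.length - 2) with hlt | hge
  · rw [Nat.mod_eq_of_lt hlt] at hx
    have := hd.isPathSeq_getVert.hasCycleLength_two_add (j := 2 + j) (m := k - 2) (by omega)
      (by omega) (by omega) hy
      (by rw [show 2 + j + (k - 2) - 1 = 2 + (j + (k - 3)) by omega, getVert_zero]; exact hx.symm)
    rwa [show 2 + (k - 2) = k by omega] at this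
  · rw [Nat.mod_eq_sub_mod hge, Nat.mod_eq_of_lt (by omega)] at hx
    have := hd.isPathSeq_getVert_one_add.hasCycleLength_of_crossing_chords
      (i := 1 + (j + (k - 3) - (d.length - 2))) (j := 1 + j) (by omega) (by omega)
      (by rw [show 1 + (d.length - 1) = d.length by omega, getVert_length]
          simpa [← add_assoc, one_add_one_eq_two] using hx.symm)
      (by rw [← add_assoc]; exact hy.symm) (by omega)
    rwa [show 1 + (j + (k - 3) - (d.length - 2)) + 1 + (d.length - (1 + j)) = k by omega] at this

theorem IsHamiltonianCycle.exists_getVert_eq [DecidableEq V] (hd : d.IsHamiltonianCycle)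
    (u : V) : ∃ i < d.length, d.getVert i = u := by
  obtain ⟨i, hiu, hi⟩ := d.mem_support_iff_exists_getVert.mp (hd.mem_support u)
  rcases hi.lt_or_eq with hi | rfl
  · exact ⟨i, hi, hiu⟩
  · exact ⟨0, hd.isCycle.three_le_length.trans_lt' (by omega), by simpa using hiu⟩

theorem IsHamiltonianCycle.hasCycleLength [Fintype V] [DecidableEq V] [DecidableRel G.Adj]
    (hd : d.IsHamiltonianCycle) (hdeg : Fintype.card V + 1 ≤ G.degree x + G.degree d.snd)
    {k : ℕ} (hk : 3 ≤ k) (hkn : k < Fintype.card V) : HasCycleLength G k := by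
  have hn : d.length = Fintype.card V := hd.length_eq
  by_contra hno
  have hx := degree_le_card_filter_add_one (G := G) (by omega) hd.exists_getVert_eq
    (Or.inl d.getVert_zero.symm)
  have hy := degree_le_card_filter_add_one (G := G) (u := d.snd) (by omega) hd.exists_getVert_eq
    (Or.inr rfl)
  have := card_add_card_le_of_add_mod_notMem (s := k - 3)
    (A := {j ∈ range (d.length - 2) | G.Adj x (d.getVert (2 + j))})
    (B := {j ∈ range (d.length - 2) | G.Adj d.snd (d.getVert (2 + j))})
    (filter_subset _ _) (filter_subset _ _) fun j hj hjx => by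
      simp only [mem_filter, mem_range] at hj hjx
      exact hno (hd.isCycle.hasCycleLength_of_adj_of_adj hk (by omega) hj.1 hj.2 hjx.2)
  omega

theorem IsHamiltonianCycle.isPancyclic [Fintype V] [DecidableEq V] [DecidableRel G.Adj]
    (hd : d.IsHamiltonianCycle) (hdeg : Fintype.card V + 1 ≤ G.degree x + G.degree d.snd) :
    IsPancyclic G := fun _ hk hkn => hkn.lt_or_eq.elim (hd.hasCycleLength hdeg hk)
  fun h => ⟨x, d, hd.isCycle, hd.length_eq.trans h.symm⟩

end Walk

end SimpleGraph

theorem pancyclic_of_hamiltonian_consecutive_heavy_pair {V : Type} [Fintype V]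
    (G : SimpleGraph V) [DecidableRel G.Adj]
    (v : V) (c : G.Walk v v) (hc : c.IsCycle) (hspan : ∀ u : V, u ∈ c.support)
    (x y : V) (hdist : (c.toSubgraph.spanningCoe).dist x y = 1)
    (hdeg : Fintype.card V + 1 ≤ G.degree x + G.degree y) :
    IsPancyclic G := by
  classical
  have hxy : (c.rotate x (hspan x)).toSubgraph.Adj x y := by
    rw [Walk.toSubgraph_rotate]
    exact dist_eq_one_iff_adj.mp hdist
  obtain ⟨d, hd, rfl, hverts⟩ := (hc.rotate (hspan x)).exists_isCycle_snd_verts_eq hxy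
  have hdspan : ∀ u, u ∈ d.support := fun u => by
    rw [← Walk.mem_verts_toSubgraph, hverts, Walk.toSubgraph_rotate, Walk.mem_verts_toSubgraph]
    exact hspan u
  exact (hd.isHamiltonianCycle_of_forall_mem_support hdspan).isPancyclic hdeg
end

section
/- Let G be a 2-connected graph which is not a cycle. If G contains no induced subgraph isomorphic to K_{1,3} and no induced subgraph isomorphic to Z_1, then G is pancyclic. -/
open SimpleGraph

/-!
A 2-connected graph has minimum degree at least 2, so if it is not a cycle some vertex has three
neighbours, and claw-freeness puts an edge among them: a triangle. A cycle `C` shorter than `n` can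
always be lengthened by one. By connectivity some vertex `u` off `C` is adjacent to a vertex `a` of
`C`; let `b`, `b'` be the neighbours of `a` on `C`. If `u` is adjacent to neither, then
`{a, b, b', u}` induces a paw when `b ~ b'` and a claw otherwise. So `u` is adjacent to `b`, say,
and replacing the edge `ab` of `C` by the path `a u b` gives a cycle of length `|C| + 1`.
-/

namespace SimpleGraph

variable {V : Type} {G : SimpleGraph V} {a b c u v w : V}

theorem adj_or_adj_or_adj_of_clawFree (hclaw : RFree G claw)
    (ha : G.Adj v a) (hb : G.Adj v b) (hc : G.Adj v c)
    (hab : a ≠ b) (hac : a ≠ c) (hbc : b ≠ c) : G.Adj a b ∨ G.Adj a c ∨ G.Adj b c := by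
  by_contra! h
  obtain ⟨hab', hac', hbc'⟩ := h
  refine hclaw.elim ⟨⟨![v, a, b, c], ?_⟩, fun {x y} => ?_⟩
  · intro x y hxy
    fin_cases x <;> fin_cases y <;> simp_all [ha.ne, hb.ne, hc.ne]
  · change G.Adj (![_, _, _, _] x) (![_, _, _, _] y) ↔ _
    fin_cases x <;> fin_cases y <;>
      simp [claw, ha, hb, hc, ha.symm, hb.symm, hc.symm, hab', hac', hbc', G.adj_comm b a,
        G.adj_comm c a, G.adj_comm c b]

theorem adj_or_adj_of_Z1Free (hZ1 : RFree G (Zgraph 1))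
    (hab : G.Adj a b) (hac : G.Adj a c) (hbc : G.Adj b c) (hu : G.Adj a u)
    (hub : u ≠ b) (huc : u ≠ c) : G.Adj u b ∨ G.Adj u c := by
  by_contra! h
  obtain ⟨hub', huc'⟩ := h
  refine hZ1.elim ⟨⟨![b, c, a, u], ?_⟩, fun {x y} => ?_⟩
  · intro x y hxy
    fin_cases x <;> fin_cases y <;> simp_all [hab.ne, hac.ne, hbc.ne, hu.ne]
  · change G.Adj (![_, _, _, _] x) (![_, _, _, _] y) ↔ _
    fin_cases x <;> fin_cases y <;>
      simp [Zgraph, hab, hac, hbc, hu, hab.symm, hac.symm, hbc.symm, hu.symm, hub', huc',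
        G.adj_comm b u, G.adj_comm c u]

theorem adj_or_adj_of_clawFree_of_Z1Free (hclaw : RFree G claw) (hZ1 : RFree G (Zgraph 1))
    (hab : G.Adj a b) (hac : G.Adj a c) (hu : G.Adj a u)
    (hbc : b ≠ c) (hub : u ≠ b) (huc : u ≠ c) : G.Adj u b ∨ G.Adj u c := by
  by_cases hbc' : G.Adj b c
  · exact adj_or_adj_of_Z1Free hZ1 hab hac hbc' hu hub huc
  · have := adj_or_adj_or_adj_of_clawFree hclaw hab hac hu hbc hub.symm huc.symm
    simp_all [G.adj_comm u]

theorem hasCycleLength_three_of_clawFree [Fintype V] [DecidableRel G.Adj]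
    (hclaw : RFree G claw) (hv : 3 ≤ G.degree v) : HasCycleLength G 3 := by
  classical
  obtain ⟨a, ha, b, hb, c, hc, hab, hac, hbc⟩ := Finset.two_lt_card.mp hv
  rw [mem_neighborFinset] at ha hb hc
  refine is3Clique_iff_exists_cycle_length_three.mp ?_
  rcases adj_or_adj_or_adj_of_clawFree hclaw ha hb hc hab hac hbc with h | h | h
  · exact ⟨{v, a, b}, is3Clique_triple_iff.mpr ⟨ha, hb, h⟩⟩
  · exact ⟨{v, a, c}, is3Clique_triple_iff.mpr ⟨ha, hc, h⟩⟩
  · exact ⟨{v, b, c}, is3Clique_triple_iff.mpr ⟨hb, hc, h⟩⟩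

namespace Walk

theorem IsCycle.hasCycleLength_succ_of_adj_snd {c : G.Walk a a} (hc : c.IsCycle)
    (hu : u ∉ c.support) (hua : G.Adj u a) (hub : G.Adj u c.snd) :
    HasCycleLength G (c.length + 1) := by
  cases c with
  | nil => exact absurd hc not_isCycle_nil
  | cons h p =>
    rw [cons_isCycle_iff] at hc
    simp only [snd_cons, support_cons, List.mem_cons, not_or] at hub hu
    refine ⟨a, cons hua.symm (cons hub p), ?_, by simp⟩
    rw [cons_isCycle_iff, cons_isPath_iff, edges_cons, List.mem_cons, not_or]
    refine ⟨⟨hc.1, hu.2⟩, ?_, fun he => hu.2 (p.snd_mem_support_of_mem_edges he)⟩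
    simp [Ne.symm hu.1, h.ne]

theorem IsCycle.hasCycleLength_succ_of_clawFree_of_Z1Free (hclaw : RFree G claw)
    (hZ1 : RFree G (Zgraph 1)) {c : G.Walk a a} (hc : c.IsCycle) (hu : u ∉ c.support)
    (hau : G.Adj a u) : HasCycleLength G (c.length + 1) := by
  have hb : G.Adj a c.snd := c.adj_snd hc.not_nil
  have hb' : G.Adj a c.penultimate := (c.adj_penultimate hc.not_nil).symm
  have hub : u ≠ c.snd := fun h => hu (h ▸ c.getVert_mem_support 1)
  have hub' : u ≠ c.penultimate := fun h => hu (h ▸ c.getVert_mem_support _)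
  rcases adj_or_adj_of_clawFree_of_Z1Free hclaw hZ1 hb hb' hau hc.snd_ne_penultimate hub hub'
    with h | h
  · exact hc.hasCycleLength_succ_of_adj_snd hu hau.symm h
  · rw [← c.length_reverse]
    exact hc.reverse.hasCycleLength_succ_of_adj_snd (by simpa using hu) hau.symm
      (by rwa [snd_reverse])

theorem IsCycle.exists_notMem_support [Fintype V] {c : G.Walk w w} (hc : c.IsCycle)
    (hlt : c.length < Fintype.card V) : ∃ u, u ∉ c.support := by
  classical
  by_contra! hall
  refine hlt.ne (IsHamiltonianCycle.length_eq
    ⟨hc, hc.isPath_tail.isHamiltonian_of_mem fun u => ?_⟩)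
  rw [support_tail_of_not_nil _ hc.not_nil]
  rcases c.mem_support_iff.mp (hall u) with rfl | h
  · exact end_mem_tail_support hc.not_nil
  · exact h

end Walk

theorem HasCycleLength.succ_of_lt_card [Fintype V] (hconn : G.Connected) (hclaw : RFree G claw)
    (hZ1 : RFree G (Zgraph 1)) {k : ℕ} (hk : HasCycleLength G k) (hlt : k < Fintype.card V) :
    HasCycleLength G (k + 1) := by
  classical
  obtain ⟨w, c, hc, rfl⟩ := hk
  obtain ⟨x, hx⟩ := hc.exists_notMem_support hlt
  obtain ⟨⟨⟨a, u⟩, hau⟩, -, ha, hu⟩ :=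
    (hconn.preconnected w x).some.exists_boundary_dart {v | v ∈ c.support} c.start_mem_support hx
  simpa using
    (hc.rotate ha).hasCycleLength_succ_of_clawFree_of_Z1Free hclaw hZ1 (by simpa using hu) hau

namespace TwoConnected

variable [Fintype V] (h2 : TwoConnected G)
include h2

theorem exists_ne_ne (x y : V) : ∃ z, z ≠ x ∧ z ≠ y :=
  ENat.exists_ne_ne_of_three_le (by simpa using h2.1) x y

theorem connected : G.Connected := by
  have : Nonempty V := Fintype.card_pos_iff.mp (by linarith [h2.1])
  refine ⟨fun x y => ?_⟩
  obtain ⟨w, hwx, hwy⟩ := h2.exists_ne_ne x y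
  have hxy := (h2.2 w).preconnected ⟨x, hwx.symm⟩ ⟨y, hwy.symm⟩
  simpa using hxy.map (Embedding.induce _).toHom

theorem exists_adj_ne {x : V} (hvx : v ≠ x) : ∃ y, G.Adj v y ∧ y ≠ x := by
  obtain ⟨w, hwv, hwx⟩ := h2.exists_ne_ne v x
  have : Nontrivial {u : V | u ≠ x} :=
    nontrivial_of_ne ⟨v, hvx⟩ ⟨w, hwx⟩ (by simpa using hwv.symm)
  obtain ⟨y, hy⟩ := (h2.2 x).preconnected.exists_adj_of_nontrivial ⟨v, hvx⟩
  exact ⟨y, hy, y.2⟩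

theorem two_le_degree [DecidableRel G.Adj] (v : V) : 2 ≤ G.degree v := by
  obtain ⟨x, hxv, -⟩ := h2.exists_ne_ne v v
  obtain ⟨y, hy, -⟩ := h2.exists_adj_ne hxv.symm
  obtain ⟨z, hz, hzy⟩ := h2.exists_adj_ne hy.ne
  exact Finset.one_lt_card.mpr ⟨y, by simpa using hy, z, by simpa using hz, hzy.symm⟩

end TwoConnected

end SimpleGraph

theorem pancyclic_of_claw_Z1_free {V : Type} [Fintype V] (G : SimpleGraph V)
    [DecidableRel G.Adj] (h2 : TwoConnected G) (hnc : ¬ IsCycleGraph G)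
    (hclaw : RFree G claw) (hZ1 : RFree G (Zgraph 1)) :
    IsPancyclic G := by
  have hconn := h2.connected
  obtain ⟨v, hv⟩ : ∃ v, 3 ≤ G.degree v := by
    by_contra! h
    exact hnc ⟨hconn, fun v => le_antisymm (Nat.le_of_lt_succ (h v)) (h2.two_le_degree v)⟩
  intro k hk
  induction k, hk using Nat.le_induction with
  | base => exact fun _ => hasCycleLength_three_of_clawFree hclaw hv
  | succ k _ ih => exact fun hk => (ih (by omega)).succ_of_lt_card hconn hclaw hZ1 hk
end
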